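/- Let ν be a symmetric Lévy measure on R^N and let u, v be measurable functions with E(u,u) < ∞ and E(v,v) < ∞, where E(w,w) = ∫_{R^N} |D^ν w(x)|² dx. Then E(uv, uv)^{1/2} ≤ ( ∫_{R^N} |u(x)|² |D^ν v(x)|² dx )^{1/2} + ( ∫_{R^N} |D^ν u(x)|² |v(x)|² dx )^{1/2}. -/

import Mathlib

open MeasureTheory Metric ENNReal

/-- The α-stable Lévy measure with spectral measure `μ` on the unit sphere:
`ν(dy) = dμ(θ) dr / r^{1+α}` in polar coordinates `y = r θ`. -/
noncomputable def stableMeasure {N : ℕ}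
    (μ : Measure (sphere (0 : EuclideanSpace ℝ (Fin N)) 1)) (α : ℝ) :
    Measure (EuclideanSpace ℝ (Fin N)) :=
  Measure.map (fun p : sphere (0 : EuclideanSpace ℝ (Fin N)) 1 × ℝ =>
      p.2 • (p.1 : EuclideanSpace ℝ (Fin N)))
    (μ.prod ((volume.restrict (Set.Ioi (0 : ℝ))).withDensity
      fun r => ENNReal.ofReal (r ^ (-1 - α))))

/-- The ν-gradient `D^ν u (x) = ((1/2) ∫ |u(x) - u(x-y)|² ν(dy))^{1/2}`. -/
noncomputable def Dnu {N : ℕ} (ν : Measure (EuclideanSpace ℝ (Fin N)))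
    (u : EuclideanSpace ℝ (Fin N) → ℝ) (x : EuclideanSpace ℝ (Fin N)) : ℝ≥0∞ :=
  (2⁻¹ * ∫⁻ y, (‖u x - u (x - y)‖₊ : ℝ≥0∞) ^ 2 ∂ν) ^ (1 / 2 : ℝ)

/-- The energy (Dirichlet form) `E(u,u) = ∫ |D^ν u|² dx`. -/
noncomputable def energy {N : ℕ} (ν : Measure (EuclideanSpace ℝ (Fin N)))
    (u : EuclideanSpace ℝ (Fin N) → ℝ) : ℝ≥0∞ :=
  ∫⁻ x, Dnu ν u x ^ 2

/-!
Writing `D^ν w (x)² = ½ ∫ |w(x) - w(x-y)|² ν(dy)`, all three integrals in the estimate are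
integrals over the product measure `½ dx ⊗ ν(dy)`. Pointwise,
`|(uv)(x) - (uv)(x-y)| ≤ |u(x)| |v(x) - v(x-y)| + |u(x) - u(x-y)| |v(x-y)|`, so Minkowski's
inequality in `L²(½ dx ⊗ ν)` bounds `E(uv,uv)^{1/2}`. The first term is already
`∫ |u|² |D^ν v|²`; in the second, the substitution `(x, y) ↦ (x - y, -y)`, which preserves
`dx ⊗ ν` because Lebesgue measure is translation invariant and `ν` is symmetric, moves the weight
from `v(x-y)` to `v(x)`. Fubini is available since the Lévy condition makes `ν` s-finite.
-/

namespace MeasureTheory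

variable {α : Type*} [MeasurableSpace α] {μ : Measure α}

lemma sigmaFinite_restrict_ne_zero_of_lintegral_ne_top {f : α → ℝ≥0∞} (hf : Measurable f)
    (hint : ∫⁻ a, f a ∂μ ≠ ∞) : SigmaFinite (μ.restrict {a | f a ≠ 0}) := by
  set ρ := μ.restrict {a | f a ≠ 0}
  have hne_zero : ∀ᵐ a ∂ρ, f a ≠ 0 := ae_restrict_mem (hf (measurableSet_singleton 0).compl)
  have hne_top : ∀ᵐ a ∂ρ, f a ≠ ∞ := ae_restrict_of_ae ((ae_lt_top hf hint).mono fun _ h => h.ne)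
  have : IsFiniteMeasure (ρ.withDensity f) :=
    isFiniteMeasure_withDensity (ne_top_of_le_ne_top hint (setLIntegral_le_lintegral _ _))
  -- `ρ` is recovered from the finite measure `f ρ` through the a.e. finite density `f⁻¹`.
  rw [← withDensity_inv_same hf hne_zero hne_top]
  exact SigmaFinite.withDensity_of_ne_top ((withDensity_absolutelyContinuous ρ f).ae_le
    (hne_zero.mono fun _ h => ENNReal.inv_ne_top.2 h))

lemma lintegral_rpow_half_sq_add_le {f g : α → ℝ≥0∞} (hf : AEMeasurable f μ)
    (hg : AEMeasurable g μ) :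
    (∫⁻ a, (f a + g a) ^ 2 ∂μ) ^ (1 / 2 : ℝ)
      ≤ (∫⁻ a, f a ^ 2 ∂μ) ^ (1 / 2 : ℝ) + (∫⁻ a, g a ^ 2 ∂μ) ^ (1 / 2 : ℝ) := by
  have h := ENNReal.lintegral_Lp_add_le hf hg one_le_two
  simp only [Pi.add_apply, ENNReal.rpow_two] at h
  simpa using h

end MeasureTheory

lemma sFinite_of_lintegral_min_one_nnnorm_sq_lt_top {E : Type*} [NormedAddCommGroup E]
    [MeasurableSpace E] [OpensMeasurableSpace E] {ν : Measure E}
    (hlevy : ∫⁻ y, min 1 ((‖y‖₊ : ℝ≥0∞) ^ 2) ∂ν < ⊤) : SFinite ν := by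
  have hf : Measurable fun y : E => min 1 ((‖y‖₊ : ℝ≥0∞) ^ 2) := by fun_prop
  have hsupp : {y : E | min 1 ((‖y‖₊ : ℝ≥0∞) ^ 2) ≠ 0} = {0}ᶜ := by
    ext y; simp
  have := sigmaFinite_restrict_ne_zero_of_lintegral_ne_top hf hlevy.ne
  rw [hsupp] at this
  rw [← Measure.restrict_add_restrict_compl (μ := ν) (measurableSet_singleton 0),
    Measure.restrict_singleton]
  infer_instance

lemma measurePreserving_sub_neg_prod {G : Type*} [AddGroup G] [MeasurableSpace G]
    [MeasurableAdd₂ G] [MeasurableNeg G] (μ ν : Measure G) [SFinite μ] [SFinite ν]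
    [μ.IsAddRightInvariant] [ν.IsNegInvariant] :
    MeasurePreserving (fun p : G × G => (p.1 - p.2, -p.2)) (μ.prod ν) (μ.prod ν) := by
  have hskew : MeasurePreserving (fun q : G × G => (-q.1, q.2 - q.1)) (ν.prod μ) (ν.prod μ) :=
    (Measure.measurePreserving_neg ν).skew_product (g := fun y x => x - y) (by fun_prop)
      (ae_of_all _ fun y => map_sub_right_eq_self μ y)
  exact (Measure.measurePreserving_swap.comp hskew).comp Measure.measurePreserving_swap

lemma nnnorm_mul_sub_mul_le {R : Type*} [NonUnitalSeminormedRing R] (a b c d : R) :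
    ‖a * b - c * d‖₊ ≤ ‖a‖₊ * ‖b - d‖₊ + ‖a - c‖₊ * ‖d‖₊ := by
  calc ‖a * b - c * d‖₊ = ‖a * (b - d) + (a - c) * d‖₊ := by noncomm_ring
    _ ≤ _ := (nnnorm_add_le _ _).trans (add_le_add (nnnorm_mul_le _ _) (nnnorm_mul_le _ _))

section Dnu

variable {N : ℕ} {ν : Measure (EuclideanSpace ℝ (Fin N))}

lemma Dnu_sq (w : EuclideanSpace ℝ (Fin N) → ℝ) (x : EuclideanSpace ℝ (Fin N)) :
    Dnu ν w x ^ 2 = 2⁻¹ * ∫⁻ y, (‖w x - w (x - y)‖₊ : ℝ≥0∞) ^ 2 ∂ν := by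
  rw [Dnu, ← ENNReal.rpow_natCast, ← ENNReal.rpow_mul]
  norm_num

variable [SFinite ν] {w : EuclideanSpace ℝ (Fin N) → ℝ}

lemma lintegral_mul_Dnu_sq {a : EuclideanSpace ℝ (Fin N) → ℝ≥0∞} (ha : Measurable a)
    (hw : Measurable w) :
    ∫⁻ x, a x * Dnu ν w x ^ 2
      = ∫⁻ p, a p.1 * (‖w p.1 - w (p.1 - p.2)‖₊ : ℝ≥0∞) ^ 2 ∂((2⁻¹ : ℝ≥0∞) • volume.prod ν) := by
  rw [lintegral_smul_measure, lintegral_prod _ (by fun_prop), smul_eq_mul,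
    ← lintegral_const_mul _ (by fun_prop)]
  refine lintegral_congr fun x => ?_
  dsimp only
  rw [Dnu_sq, lintegral_const_mul _ (by fun_prop)]
  ring

lemma energy_eq_lintegral_prod (hw : Measurable w) :
    energy ν w
      = ∫⁻ p, (‖w p.1 - w (p.1 - p.2)‖₊ : ℝ≥0∞) ^ 2 ∂((2⁻¹ : ℝ≥0∞) • volume.prod ν) := by
  simpa [energy] using lintegral_mul_Dnu_sq measurable_const hw (a := 1) (ν := ν)

lemma lintegral_comp_sub_mul_nnnorm_sub_sq [ν.IsNegInvariant]
    {a : EuclideanSpace ℝ (Fin N) → ℝ≥0∞} (ha : Measurable a) (hw : Measurable w) :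
    ∫⁻ p, a (p.1 - p.2) * (‖w p.1 - w (p.1 - p.2)‖₊ : ℝ≥0∞) ^ 2 ∂((2⁻¹ : ℝ≥0∞) • volume.prod ν)
      = ∫⁻ p, a p.1 * (‖w p.1 - w (p.1 - p.2)‖₊ : ℝ≥0∞) ^ 2 ∂((2⁻¹ : ℝ≥0∞) • volume.prod ν) := by
  rw [← ((measurePreserving_sub_neg_prod volume ν).smul_measure (2⁻¹ : ℝ≥0∞)).lintegral_comp
    (f := fun p => a p.1 * (‖w p.1 - w (p.1 - p.2)‖₊ : ℝ≥0∞) ^ 2) (by fun_prop)]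
  congr with p
  dsimp only
  rw [sub_neg_eq_add, sub_add_cancel, ← nnnorm_neg (w (p.1 - p.2) - w p.1), neg_sub]

end Dnu

theorem energy_product_estimate_general {N : ℕ}
    (ν : Measure (EuclideanSpace ℝ (Fin N)))
    (hlevy : ∫⁻ y, min 1 ((‖y‖₊ : ℝ≥0∞) ^ 2) ∂ν < ⊤)
    (hsym : Measure.map (fun y : EuclideanSpace ℝ (Fin N) => -y) ν = ν)
    (u v : EuclideanSpace ℝ (Fin N) → ℝ) (hu : Measurable u) (hv : Measurable v) :
    energy ν (fun x => u x * v x) ^ (1 / 2 : ℝ)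
      ≤ (∫⁻ x, (‖u x‖₊ : ℝ≥0∞) ^ 2 * Dnu ν v x ^ 2) ^ (1 / 2 : ℝ)
        + (∫⁻ x, Dnu ν u x ^ 2 * (‖v x‖₊ : ℝ≥0∞) ^ 2) ^ (1 / 2 : ℝ) := by
  have : SFinite ν := sFinite_of_lintegral_min_one_nnnorm_sq_lt_top hlevy
  have : ν.IsNegInvariant := ⟨hsym⟩
  set μ := (2⁻¹ : ℝ≥0∞) • (volume : Measure (EuclideanSpace ℝ (Fin N))).prod ν
  have hfirst : ∫⁻ x, (‖u x‖₊ : ℝ≥0∞) ^ 2 * Dnu ν v x ^ 2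
      = ∫⁻ p, ((‖u p.1‖₊ : ℝ≥0∞) * ‖v p.1 - v (p.1 - p.2)‖₊) ^ 2 ∂μ := by
    simp_rw [mul_pow]
    exact lintegral_mul_Dnu_sq (by fun_prop) hv
  have hsecond : ∫⁻ x, Dnu ν u x ^ 2 * (‖v x‖₊ : ℝ≥0∞) ^ 2
      = ∫⁻ p, ((‖u p.1 - u (p.1 - p.2)‖₊ : ℝ≥0∞) * ‖v (p.1 - p.2)‖₊) ^ 2 ∂μ := by
    simp_rw [mul_comm (Dnu ν u _ ^ 2), mul_pow, mul_comm ((‖u _ - u _‖₊ : ℝ≥0∞) ^ 2)]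
    have hv2 : Measurable fun x => (‖v x‖₊ : ℝ≥0∞) ^ 2 := by fun_prop
    exact (lintegral_mul_Dnu_sq hv2 hu).trans (lintegral_comp_sub_mul_nnnorm_sub_sq hv2 hu).symm
  rw [hfirst, hsecond, energy_eq_lintegral_prod (by fun_prop)]
  calc _ ≤ (∫⁻ p, ((‖u p.1‖₊ : ℝ≥0∞) * ‖v p.1 - v (p.1 - p.2)‖₊
          + (‖u p.1 - u (p.1 - p.2)‖₊ : ℝ≥0∞) * ‖v (p.1 - p.2)‖₊) ^ 2 ∂μ) ^ (1 / 2 : ℝ) := by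
        gcongr with p
        exact_mod_cast nnnorm_mul_sub_mul_le _ _ _ _
    _ ≤ _ := lintegral_rpow_half_sq_add_le (by fun_prop) (by fun_prop)

theorem energy_product_estimate {N : ℕ} (hN : 2 ≤ N)
    (ν : Measure (EuclideanSpace ℝ (Fin N)))
    (hlevy : ∫⁻ y, min 1 ((‖y‖₊ : ℝ≥0∞) ^ 2) ∂ν < ⊤)
    (hsym : Measure.map (fun y : EuclideanSpace ℝ (Fin N) => -y) ν = ν)
    (u v : EuclideanSpace ℝ (Fin N) → ℝ) (hu : Measurable u) (hv : Measurable v)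
    (hEu : energy ν u < ⊤) (hEv : energy ν v < ⊤) :
    energy ν (fun x => u x * v x) ^ (1 / 2 : ℝ)
      ≤ (∫⁻ x, (‖u x‖₊ : ℝ≥0∞) ^ 2 * Dnu ν v x ^ 2) ^ (1 / 2 : ℝ)
        + (∫⁻ x, Dnu ν u x ^ 2 * (‖v x‖₊ : ℝ≥0∞) ^ 2) ^ (1 / 2 : ℝ) :=
  energy_product_estimate_general ν hlevy hsym u v hu hv
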